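/- Let f = (f_1, f_2) : K^2 → K^2 be a polynomial map. If the Minkowski sum A = NP(f_1) ⊕ NP(f_2) has dimension at most 1 (i.e., A is contained in a line), then f maps K^2 into an algebraic curve, and hence f is not dominant. -/
import Mathlib


open MvPolynomial
open scoped Pointwise

noncomputable section

/-- The exponent vector of a monomial, viewed as a point of `ℝ²`. -/
def expToReal (d : Fin 2 →₀ ℕ) : Fin 2 → ℝ := fun i => (d i : ℝ)

/-- The Newton polytope of a bivariate polynomial: the convex hull of its support. -/
def newtonPolytope {K : Type*} [CommSemiring K] (f : MvPolynomial (Fin 2) K) :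
    Set (Fin 2 → ℝ) :=
  convexHull ℝ (expToReal '' (f.support : Set (Fin 2 →₀ ℕ)))

/-- Auxiliary: exponent pairs as finsupps. -/
def mexp2 (ij : ℕ × ℕ) : Fin 2 →₀ ℕ := Finsupp.single 0 ij.1 + Finsupp.single 1 ij.2

lemma mexp2_apply0 (ij : ℕ × ℕ) : mexp2 ij 0 = ij.1 := by simp [mexp2]
lemma mexp2_apply1 (ij : ℕ × ℕ) : mexp2 ij 1 = ij.2 := by simp [mexp2]

lemma mexp2_inj : Function.Injective mexp2 := by
  intro a b h
  have h0 := congrArg (fun d => d 0) h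
  have h1 := congrArg (fun d => d 1) h
  simp only [mexp2_apply0, mexp2_apply1] at h0 h1
  exact Prod.ext h0 h1

/-- Any two univariate polynomials over a field are algebraically dependent. -/
lemma exists_annihilator {K : Type*} [Field K] (F G : Polynomial K) :
    ∃ g : MvPolynomial (Fin 2) K, g ≠ 0 ∧ MvPolynomial.aeval ![F, G] g = 0 := by
  by_contra hcon
  push_neg at hcon
  have hinj : Function.Injective (MvPolynomial.aeval (R := K) ![F, G]) := by
    intro a b hab
    have h0 : MvPolynomial.aeval ![F, G] (a - b) = 0 := by
      rw [map_sub, hab, sub_self]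
    by_contra hne
    exact (hcon (a - b) (sub_ne_zero.mpr hne)) h0
  set D := max F.natDegree G.natDegree with hD
  set N := 2 * D + 2 with hN
  set v : Fin N × Fin N → Polynomial K := fun ij => F ^ (ij.1 : ℕ) * G ^ (ij.2 : ℕ) with hv
  set M := 2 * (N - 1) * D + 1 with hM
  have hmem : ∀ ij : Fin N × Fin N, v ij ∈ Polynomial.degreeLT K M := by
    intro ij
    rw [Polynomial.mem_degreeLT]
    refine lt_of_le_of_lt (Polynomial.degree_le_natDegree) ?_
    rw [Nat.cast_lt]
    calc (v ij).natDegree ≤ (F ^ (ij.1 : ℕ)).natDegree + (G ^ (ij.2 : ℕ)).natDegree :=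
          Polynomial.natDegree_mul_le
      _ ≤ (ij.1 : ℕ) * F.natDegree + (ij.2 : ℕ) * G.natDegree := by
          gcongr <;> exact Polynomial.natDegree_pow_le
      _ ≤ (N - 1) * D + (N - 1) * D := by
          gcongr
          · exact Nat.le_sub_one_of_lt ij.1.isLt
          · exact le_max_left _ _
          · exact Nat.le_sub_one_of_lt ij.2.isLt
          · exact le_max_right _ _
      _ < M := by
          have : 2 * (N - 1) * D = (N - 1) * D + (N - 1) * D := by ring
          omega
  have hli : LinearIndependent K (fun ij : Fin N × Fin N =>
      (⟨v ij, hmem ij⟩ : Polynomial.degreeLT K M)) := by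
    rw [linearIndependent_iff']
    intro s g hg ij hij
    have hg' : ∑ x ∈ s, g x • v x = 0 := by
      have := congrArg (Subtype.val) hg
      simpa using this
    set P : MvPolynomial (Fin 2) K :=
      ∑ x ∈ s, MvPolynomial.monomial (mexp2 ((x.1 : ℕ), (x.2 : ℕ))) (g x) with hP
    have haP : MvPolynomial.aeval ![F, G] P = 0 := by
      rw [hP, map_sum]
      rw [← hg']
      refine Finset.sum_congr rfl fun x _ => ?_
      rw [MvPolynomial.aeval_monomial]
      rw [Algebra.smul_def]
      congr 1
      rw [mexp2, Finsupp.prod_add_index]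
      · simp [Finsupp.prod_single_index, hv]
      · intro a _; simp
      · intro a b₁ b₂; simp [pow_add]
    have hP0 : P = 0 := by
      apply hinj
      rw [haP, map_zero]
    have hco := congrArg (MvPolynomial.coeff (mexp2 ((ij.1 : ℕ), (ij.2 : ℕ)))) hP0
    rw [hP] at hco
    simp only [MvPolynomial.coeff_sum, MvPolynomial.coeff_monomial,
      MvPolynomial.coeff_zero] at hco
    rwa [Finset.sum_eq_single ij, if_pos rfl] at hco
    · intro b _ hb
      rw [if_neg]
      intro hc
      have h2 := mexp2_inj hc
      exact hb (Prod.ext (Fin.val_injective (congrArg Prod.fst h2))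
        (Fin.val_injective (congrArg Prod.snd h2)))
    · intro h; exact absurd hij h
  haveI : Module.Finite K (Polynomial.degreeLT K M) :=
    Module.Finite.equiv (Polynomial.degreeLTEquiv K M).symm
  have hcard := hli.fintype_card_le_finrank
  have hfr : Module.finrank K (Polynomial.degreeLT K M) = M := by
    rw [LinearEquiv.finrank_eq (Polynomial.degreeLTEquiv K M)]
    simp
  rw [hfr, Fintype.card_prod, Fintype.card_fin] at hcard
  have h1 : N - 1 = 2 * D + 1 := by omega
  have e1 : M = 4 * (D * D) + 2 * D + 1 := by rw [hM, h1]; ring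
  have e2 : N * N = 4 * (D * D) + 8 * D + 4 := by rw [hN]; ring
  rw [e2, e1] at hcard
  generalize D * D = E at hcard
  omega

lemma nat_param {p q a b : ℕ} (hco : Nat.Coprime p q) (h : a * q = b * p) :
    ∃ k, a = k * p ∧ b = k * q := by
  rcases Nat.eq_zero_or_pos p with hp | hp
  · subst hp
    rw [Nat.coprime_zero_left] at hco
    subst hco
    simp only [mul_one, mul_zero] at h
    exact ⟨b, by simp [h], by simp⟩
  · have hd : p ∣ a := hco.dvd_of_dvd_mul_right (h ▸ dvd_mul_left p b)
    obtain ⟨k, hk⟩ := hd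
    refine ⟨k, by rw [hk, mul_comm], ?_⟩
    have h2 : b * p = k * q * p := by rw [← h, hk]; ring
    exact Nat.eq_of_mul_eq_mul_right hp h2

/-- (in the paper's setting where both `f₁` and `f₂` have a nonzero constant
term) if the Minkowski sum `A = NP(f₁) ⊕ NP(f₂)` is contained in a line, then `f = (f₁,f₂)`
maps `K²` into an algebraic curve: some nonzero polynomial `g` vanishes on the image of `f`;
in particular `f` is not dominant. -/
theorem image_in_curve_of_one_dimensional_minkowski_sum
    {K : Type*} [RCLike K] (f₁ f₂ : MvPolynomial (Fin 2) K)
    (h₁ : f₁.coeff 0 ≠ 0) (h₂ : f₂.coeff 0 ≠ 0)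
    (hline : ∃ p v : Fin 2 → ℝ,
      (newtonPolytope f₁ + newtonPolytope f₂) ⊆ {x | ∃ t : ℝ, x = p + t • v}) :
    ∃ g : MvPolynomial (Fin 2) K, g ≠ 0 ∧
      ∀ x : Fin 2 → K,
        MvPolynomial.eval
          (fun i : Fin 2 =>
            if i = 0 then MvPolynomial.eval x f₁ else MvPolynomial.eval x f₂) g = 0 := by
  obtain ⟨P, v, hL⟩ := hline
  have h0₁ : (0 : Fin 2 →₀ ℕ) ∈ f₁.support := by rwa [MvPolynomial.mem_support_iff]
  have h0₂ : (0 : Fin 2 →₀ ℕ) ∈ f₂.support := by rwa [MvPolynomial.mem_support_iff]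
  have he0 : expToReal 0 = 0 := by funext i; simp [expToReal]
  have hz₁ : (0 : Fin 2 → ℝ) ∈ newtonPolytope f₁ :=
    subset_convexHull ℝ _ ⟨0, by simpa using h0₁, he0⟩
  have hz₂ : (0 : Fin 2 → ℝ) ∈ newtonPolytope f₂ :=
    subset_convexHull ℝ _ ⟨0, by simpa using h0₂, he0⟩
  have key : ∀ d ∈ f₁.support ∪ f₂.support, ∃ t : ℝ, expToReal d = P + t • v := by
    intro d hd
    rcases Finset.mem_union.mp hd with h | h
    · have hm : expToReal d + 0 ∈ newtonPolytope f₁ + newtonPolytope f₂ :=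
        Set.add_mem_add (subset_convexHull ℝ _ ⟨d, by simpa using h, rfl⟩) hz₂
      rw [add_zero] at hm
      exact hL hm
    · have hm : (0 : Fin 2 → ℝ) + expToReal d ∈ newtonPolytope f₁ + newtonPolytope f₂ :=
        Set.add_mem_add hz₁ (subset_convexHull ℝ _ ⟨d, by simpa using h, rfl⟩)
      rw [zero_add] at hm
      exact hL hm
  obtain ⟨t₀, ht₀⟩ := key 0 (Finset.mem_union_left _ h0₁)
  rw [he0] at ht₀
  have key2 : ∀ d ∈ f₁.support ∪ f₂.support, ∃ s : ℝ, ∀ i, (d i : ℝ) = s * v i := by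
    intro d hd
    obtain ⟨t, ht⟩ := key d hd
    refine ⟨t - t₀, fun i => ?_⟩
    have e1 := congrFun ht i
    have e2 := congrFun ht₀ i
    simp only [expToReal, Pi.add_apply, Pi.smul_apply, Pi.zero_apply, smul_eq_mul] at e1 e2
    rw [sub_mul]
    linarith
  have cross : ∀ d ∈ f₁.support ∪ f₂.support, ∀ d' ∈ f₁.support ∪ f₂.support,
      d 0 * d' 1 = d 1 * d' 0 := by
    intro d hd d' hd'
    obtain ⟨s, hs⟩ := key2 d hd
    obtain ⟨s', hs'⟩ := key2 d' hd'
    have hr : ((d 0 : ℕ) : ℝ) * ((d' 1 : ℕ) : ℝ) = ((d 1 : ℕ) : ℝ) * ((d' 0 : ℕ) : ℝ) := by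
      rw [hs 0, hs 1, hs' 0, hs' 1]; ring
    exact_mod_cast hr
  by_cases hall : ∀ d ∈ f₁.support ∪ f₂.support, d = 0
  · -- f₁ is constant
    have hf₁ : f₁ = MvPolynomial.C (f₁.coeff 0) := by
      ext m
      rw [MvPolynomial.coeff_C]
      split_ifs with h
      · rw [← h]
      · by_contra hne
        exact h ((hall m (Finset.mem_union_left _
          (MvPolynomial.mem_support_iff.mpr hne))).symm)
    refine ⟨MvPolynomial.X 0 - MvPolynomial.C (f₁.coeff 0), ?_, ?_⟩
    · intro hg0
      have hc := congrArg (MvPolynomial.coeff (Finsupp.single 0 1)) hg0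
      have hne : (0 : Fin 2 →₀ ℕ) ≠ Finsupp.single (0 : Fin 2) 1 := by
        simp [eq_comm, Finsupp.single_eq_zero]
      simp [MvPolynomial.coeff_X, MvPolynomial.coeff_C, if_neg hne] at hc
    · intro x
      have hev : ∀ y : Fin 2 → K, MvPolynomial.eval y f₁ = f₁.coeff 0 := by
        intro y; rw [hf₁]; simp
      rw [map_sub, MvPolynomial.eval_C, MvPolynomial.eval_X]
      simp [hev x]
  · push_neg at hall
    obtain ⟨d₀, hd₀U, hd₀ne⟩ := hall
    have hco0 : d₀ 0 ≠ 0 ∨ d₀ 1 ≠ 0 := by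
      by_contra hc
      push_neg at hc
      exact hd₀ne (Finsupp.ext fun i => by fin_cases i <;> simp [hc.1, hc.2])
    have hg0 : 0 < Nat.gcd (d₀ 0) (d₀ 1) := by
      rcases hco0 with h | h
      · exact Nat.gcd_pos_of_pos_left _ (Nat.pos_of_ne_zero h)
      · exact Nat.gcd_pos_of_pos_right _ (Nat.pos_of_ne_zero h)
    set p := d₀ 0 / Nat.gcd (d₀ 0) (d₀ 1) with hp
    set q := d₀ 1 / Nat.gcd (d₀ 0) (d₀ 1) with hq
    have hpg : p * Nat.gcd (d₀ 0) (d₀ 1) = d₀ 0 := Nat.div_mul_cancel (Nat.gcd_dvd_left _ _)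
    have hqg : q * Nat.gcd (d₀ 0) (d₀ 1) = d₀ 1 := Nat.div_mul_cancel (Nat.gcd_dvd_right _ _)
    have hco : Nat.Coprime p q := Nat.coprime_div_gcd_div_gcd hg0
    have hmul : ∀ d ∈ f₁.support ∪ f₂.support, ∃ k, d 0 = k * p ∧ d 1 = k * q := by
      intro d hd
      have hc := cross d hd d₀ hd₀U
      have hqp : d 0 * q = d 1 * p := by
        apply Nat.eq_of_mul_eq_mul_right hg0
        calc d 0 * q * Nat.gcd (d₀ 0) (d₀ 1) = d 0 * (q * Nat.gcd (d₀ 0) (d₀ 1)) := by ring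
          _ = d 1 * (p * Nat.gcd (d₀ 0) (d₀ 1)) := by rw [hpg, hqg]; exact hc
          _ = d 1 * p * Nat.gcd (d₀ 0) (d₀ 1) := by ring
      exact nat_param hco hqp
    have hk' : ∀ d : Fin 2 →₀ ℕ, ∃ k : ℕ,
        d ∈ f₁.support ∪ f₂.support → (d 0 = k * p ∧ d 1 = k * q) := by
      intro d
      by_cases hd : d ∈ f₁.support ∪ f₂.support
      · obtain ⟨k, hk⟩ := hmul d hd
        exact ⟨k, fun _ => hk⟩
      · exact ⟨0, fun h => absurd h hd⟩
    choose k hk using hk'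
    have heval : ∀ (f : MvPolynomial (Fin 2) K),
        (∀ d ∈ f.support, d 0 = k d * p ∧ d 1 = k d * q) → ∀ x : Fin 2 → K,
        MvPolynomial.eval x f = Polynomial.eval (x 0 ^ p * x 1 ^ q)
          (f.support.sum fun d => Polynomial.C (f.coeff d) * Polynomial.X ^ (k d)) := by
      intro f hf x
      rw [MvPolynomial.eval_eq', Polynomial.eval_finset_sum]
      refine Finset.sum_congr rfl fun d hd => ?_
      rw [Polynomial.eval_mul, Polynomial.eval_C, Polynomial.eval_pow, Polynomial.eval_X]
      congr 1
      rw [Fin.prod_univ_two, (hf d hd).1, (hf d hd).2, pow_mul', pow_mul', ← mul_pow]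
    obtain ⟨g, hgne, hgann⟩ := exists_annihilator
      (f₁.support.sum fun d => Polynomial.C (f₁.coeff d) * Polynomial.X ^ (k d))
      (f₂.support.sum fun d => Polynomial.C (f₂.coeff d) * Polynomial.X ^ (k d))
    refine ⟨g, hgne, fun x => ?_⟩
    set s : K := x 0 ^ p * x 1 ^ q with hs
    have hE : (fun i : Fin 2 =>
          if i = 0 then MvPolynomial.eval x f₁ else MvPolynomial.eval x f₂)
        = fun i => Polynomial.aeval s
            (![(f₁.support.sum fun d => Polynomial.C (f₁.coeff d) * Polynomial.X ^ (k d)),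
               (f₂.support.sum fun d => Polynomial.C (f₂.coeff d) * Polynomial.X ^ (k d))] i) := by
      funext i
      fin_cases i
      · simp only [Fin.mk_zero, Matrix.cons_val_zero, Polynomial.coe_aeval_eq_eval]
        rw [if_pos trivial]
        exact heval f₁ (fun d hd => hk d (Finset.mem_union_left _ hd)) x
      · simp only [Fin.mk_one, Matrix.cons_val_one, Matrix.head_cons,
          Polynomial.coe_aeval_eq_eval]
        rw [if_neg (by norm_num)]
        exact heval f₂ (fun d hd => hk d (Finset.mem_union_right _ hd)) x
    rw [hE]
    have hcomp := congrArg (fun ψ : MvPolynomial (Fin 2) K →ₐ[K] K => ψ g)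
      (MvPolynomial.comp_aeval (φ := Polynomial.aeval s)
        (f := ![(f₁.support.sum fun d => Polynomial.C (f₁.coeff d) * Polynomial.X ^ (k d)),
                (f₂.support.sum fun d => Polynomial.C (f₂.coeff d) * Polynomial.X ^ (k d))]))
    simp only [AlgHom.comp_apply] at hcomp
    rw [hgann, map_zero] at hcomp
    have haev : MvPolynomial.aeval (fun i => Polynomial.aeval s
          (![(f₁.support.sum fun d => Polynomial.C (f₁.coeff d) * Polynomial.X ^ (k d)),
             (f₂.support.sum fun d => Polynomial.C (f₂.coeff d) * Polynomial.X ^ (k d))] i)) g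
        = MvPolynomial.eval (fun i => Polynomial.aeval s
            (![(f₁.support.sum fun d => Polynomial.C (f₁.coeff d) * Polynomial.X ^ (k d)),
               (f₂.support.sum fun d => Polynomial.C (f₂.coeff d) * Polynomial.X ^ (k d))] i)) g := by
      rw [MvPolynomial.aeval_def, Algebra.algebraMap_self]
      rfl
    rw [← haev, ← hcomp]

end
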